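/- Let γ>1, B₀>0, κ₂ ≠ 0, and suppose x : (r_*, ∞) → ℝ satisfies x(r) > 1 and x'(r) > 0 for all r, where r_* = √(γκ₂²/((γ−1)B₀)). Define f₁(r) = (1 − ((γ+1)/(γ−1))·a(r))·x(r) with a(r) = κ₂²/(2r²B₀ − κ₂²). Then f₁'(r) > 0 on (r_*, ∞). If additionally x(r) ≥ C·r^{γ−1} for some C > 0 and all large r, then f₁(r) → ∞ as r → ∞, and since f₁(r_*) = 0 there exists a unique r'_* > r_* with f₁(r'_*) = 1. -/

import Mathlib

/-!
Write `f₁ = g · x` with `g r = 1 - c κ₂² / (2 r² B₀ - κ₂²)`, `c = (γ+1)/(γ-1)`. The choice of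
`r_*` makes the denominator equal to `c κ₂²` at `r_*`, so `g` vanishes at `r_*` and is positive
and strictly increasing beyond it, with `g → 1` at infinity. Hence `f₁' = g' x + g x' > 0`,
`f₁ → ∞` as soon as `x → ∞`, and `f₁ → 0` at `r_*⁺` because `x` is monotone, hence bounded, near
`r_*`. A continuous strictly increasing function going from `0` to `∞` takes the value `1` exactly
once.
-/

open Filter Set Topology

lemma deriv_mul_pos {u v : ℝ → ℝ} {r : ℝ} (hu : DifferentiableAt ℝ u r)
    (hv : DifferentiableAt ℝ v r) (hu₀ : 0 < u r) (hv₀ : 0 < v r)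
    (hu' : 0 ≤ deriv u r) (hv' : 0 < deriv v r) : 0 < deriv (u * v) r := by
  rw [deriv_mul hu hv]
  exact add_pos_of_nonneg_of_pos (mul_nonneg hu' hv₀.le) (mul_pos hu₀ hv')

lemma strictMonoOn_Ioi_of_deriv_pos {f : ℝ → ℝ} {a : ℝ}
    (hf : ∀ r, a < r → DifferentiableAt ℝ f r) (hf' : ∀ r, a < r → 0 < deriv f r) :
    StrictMonoOn f (Ioi a) :=
  strictMonoOn_of_deriv_pos (convex_Ioi a) (fun r hr => (hf r hr).continuousAt.continuousWithinAt)
    (fun r hr => hf' r (by rwa [interior_Ioi] at hr))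

lemma isBoundedUnder_norm_nhdsGT_of_monotoneOn {x : ℝ → ℝ} {a : ℝ}
    (hpos : ∀ r ∈ Ioi a, 0 < x r) (hmono : MonotoneOn x (Ioi a)) :
    IsBoundedUnder (· ≤ ·) (𝓝[>] a) (norm ∘ x) := by
  refine isBoundedUnder_of_eventually_le (a := x (a + 1)) ?_
  filter_upwards [Ioo_mem_nhdsGT (lt_add_one a)] with r hr
  have hr' : r ∈ Ioi a := hr.1
  rw [Function.comp_apply, Real.norm_of_nonneg (hpos r hr').le]
  exact hmono hr' (lt_add_one a) hr.2.le

lemma existsUnique_eq_of_strictMonoOn_Ioi {f : ℝ → ℝ} {a l y : ℝ}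
    (hcont : ContinuousOn f (Ioi a)) (hmono : StrictMonoOn f (Ioi a))
    (hleft : Tendsto f (𝓝[>] a) (𝓝 l)) (htop : Tendsto f atTop atTop) (hy : l < y) :
    ∃! r, a < r ∧ f r = y := by
  obtain ⟨r₁, hr₁, hr₁a⟩ :=
    ((hleft.eventually_lt_const hy).and self_mem_nhdsWithin).exists
  obtain ⟨r₂, hr₂, hr₂a⟩ := ((htop.eventually_gt_atTop y).and (eventually_gt_atTop a)).exists
  obtain ⟨r, hr, hfr⟩ :=
    isPreconnected_Ioi.intermediate_value hr₁a hr₂a hcont ⟨hr₁.le, hr₂.le⟩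
  exact ⟨r, ⟨hr, hfr⟩, fun s hs => hmono.injOn hs.1 hr (hs.2.trans hfr.symm)⟩

lemma tendsto_atTop_of_rpow_le {x : ℝ → ℝ} {C p : ℝ} (hC : 0 < C) (hp : 0 < p)
    (hx : ∀ᶠ r in atTop, C * r ^ p ≤ x r) : Tendsto x atTop atTop :=
  tendsto_atTop_mono' _ hx ((tendsto_rpow_atTop hp).const_mul_atTop hC)

section ShockFactor

variable {γ B₀ κ₂ : ℝ}

/-- The factor `1 - ((γ+1)/(γ-1)) a(r)` of `f₁`. -/
noncomputable def shockFactor (γ B₀ κ₂ r : ℝ) : ℝ :=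
  1 - (γ + 1) / (γ - 1) * (κ₂ ^ 2 / (2 * r ^ 2 * B₀ - κ₂ ^ 2))

/-- The sonic radius `r_*`, where `a(r_*) = (γ-1)/(γ+1)`. -/
noncomputable def criticalRadius (γ B₀ κ₂ : ℝ) : ℝ :=
  Real.sqrt (γ * κ₂ ^ 2 / ((γ - 1) * B₀))

lemma criticalRadius_nonneg : 0 ≤ criticalRadius γ B₀ κ₂ := Real.sqrt_nonneg _

lemma two_mul_criticalRadius_sq_mul_sub (hγ : 1 < γ) (hB : 0 < B₀) :
    2 * criticalRadius γ B₀ κ₂ ^ 2 * B₀ - κ₂ ^ 2 = (γ + 1) / (γ - 1) * κ₂ ^ 2 := by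
  have hγ₁ : 0 < γ - 1 := by linarith
  rw [criticalRadius, Real.sq_sqrt (by positivity)]
  field_simp
  ring

lemma lt_two_mul_sq_mul_sub (hγ : 1 < γ) (hB : 0 < B₀) {r : ℝ}
    (hr : criticalRadius γ B₀ κ₂ < r) :
    (γ + 1) / (γ - 1) * κ₂ ^ 2 < 2 * r ^ 2 * B₀ - κ₂ ^ 2 := by
  rw [← two_mul_criticalRadius_sq_mul_sub hγ hB]
  have := pow_lt_pow_left₀ hr criticalRadius_nonneg two_ne_zero
  nlinarith

lemma two_mul_sq_mul_sub_pos (hγ : 1 < γ) (hB : 0 < B₀) (hκ₂ : κ₂ ≠ 0) {r : ℝ}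
    (hr : criticalRadius γ B₀ κ₂ < r) : 0 < 2 * r ^ 2 * B₀ - κ₂ ^ 2 := by
  have : 0 < (γ + 1) / (γ - 1) * κ₂ ^ 2 := by
    have : 0 < γ - 1 := by linarith
    positivity
  exact this.trans (lt_two_mul_sq_mul_sub hγ hB hr)

lemma shockFactor_criticalRadius (hγ : 1 < γ) (hB : 0 < B₀) (hκ₂ : κ₂ ≠ 0) :
    shockFactor γ B₀ κ₂ (criticalRadius γ B₀ κ₂) = 0 := by
  have : (γ + 1) / (γ - 1) * κ₂ ^ 2 ≠ 0 := by
    have : 0 < γ - 1 := by linarith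
    positivity
  rw [shockFactor, two_mul_criticalRadius_sq_mul_sub hγ hB, ← mul_div_assoc, div_self this,
    sub_self]

lemma shockFactor_pos (hγ : 1 < γ) (hB : 0 < B₀) (hκ₂ : κ₂ ≠ 0) {r : ℝ}
    (hr : criticalRadius γ B₀ κ₂ < r) : 0 < shockFactor γ B₀ κ₂ r := by
  have hD := two_mul_sq_mul_sub_pos hγ hB hκ₂ hr
  have : (γ + 1) / (γ - 1) * (κ₂ ^ 2 / (2 * r ^ 2 * B₀ - κ₂ ^ 2)) < 1 := by
    rw [← mul_div_assoc, div_lt_one hD]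
    exact lt_two_mul_sq_mul_sub hγ hB hr
  rw [shockFactor]
  linarith

lemma hasDerivAt_shockFactor {r : ℝ} (hD : 2 * r ^ 2 * B₀ - κ₂ ^ 2 ≠ 0) :
    HasDerivAt (shockFactor γ B₀ κ₂)
      ((γ + 1) / (γ - 1) * κ₂ ^ 2 * (4 * r * B₀) / (2 * r ^ 2 * B₀ - κ₂ ^ 2) ^ 2) r := by
  have hDd : HasDerivAt (fun r => 2 * r ^ 2 * B₀ - κ₂ ^ 2) (4 * r * B₀) r :=
    ((((hasDerivAt_pow 2 r).const_mul 2).mul_const B₀).sub_const (κ₂ ^ 2)).congr_deriv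
      (by ring)
  exact ((((hasDerivAt_const r (κ₂ ^ 2)).div hDd hD).const_mul ((γ + 1) / (γ - 1))).const_sub
    1).congr_deriv (by ring)

lemma differentiableAt_shockFactor (hγ : 1 < γ) (hB : 0 < B₀) (hκ₂ : κ₂ ≠ 0) {r : ℝ}
    (hr : criticalRadius γ B₀ κ₂ < r) : DifferentiableAt ℝ (shockFactor γ B₀ κ₂) r :=
  (hasDerivAt_shockFactor (two_mul_sq_mul_sub_pos hγ hB hκ₂ hr).ne').differentiableAt

lemma deriv_shockFactor_pos (hγ : 1 < γ) (hB : 0 < B₀) (hκ₂ : κ₂ ≠ 0) {r : ℝ}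
    (hr : criticalRadius γ B₀ κ₂ < r) : 0 < deriv (shockFactor γ B₀ κ₂) r := by
  have hD := two_mul_sq_mul_sub_pos hγ hB hκ₂ hr
  have hr₀ : 0 < r := criticalRadius_nonneg.trans_lt hr
  have : 0 < γ - 1 := by linarith
  rw [(hasDerivAt_shockFactor hD.ne').deriv]
  positivity

lemma tendsto_shockFactor_nhdsGT_criticalRadius (hγ : 1 < γ) (hB : 0 < B₀) (hκ₂ : κ₂ ≠ 0) :
    Tendsto (shockFactor γ B₀ κ₂) (𝓝[>] criticalRadius γ B₀ κ₂) (𝓝 0) := by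
  have hD : 2 * criticalRadius γ B₀ κ₂ ^ 2 * B₀ - κ₂ ^ 2 ≠ 0 := by
    have : 0 < γ - 1 := by linarith
    rw [two_mul_criticalRadius_sq_mul_sub hγ hB]
    positivity
  rw [← shockFactor_criticalRadius hγ hB hκ₂]
  exact (hasDerivAt_shockFactor hD).continuousAt.continuousWithinAt.tendsto

lemma tendsto_shockFactor_atTop (hB : 0 < B₀) :
    Tendsto (shockFactor γ B₀ κ₂) atTop (𝓝 1) := by
  have hD : Tendsto (fun r : ℝ => 2 * r ^ 2 * B₀ - κ₂ ^ 2) atTop atTop :=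
    tendsto_atTop_add_const_right _ _
      (((tendsto_pow_atTop two_ne_zero).const_mul_atTop two_pos).atTop_mul_const hB)
  have := (((tendsto_const_nhds (x := κ₂ ^ 2)).div_atTop hD).const_mul
    ((γ + 1) / (γ - 1))).const_sub 1
  rwa [mul_zero, sub_zero] at this

end ShockFactor

/-- With `x(r) > 1`, `x'(r) > 0` on `(r_*, ∞)` (`r_* = √(γκ₂²/((γ−1)B₀))`),
`f₁(r) = (1 − ((γ+1)/(γ−1))a(r))x(r)` with `a(r) = κ₂²/(2r²B₀ − κ₂²)` satisfies
`f₁' > 0` on `(r_*, ∞)`; if moreover `x(r) ≥ C r^{γ−1}` for large `r`, then `f₁ → ∞` at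
infinity and there is a unique `r'_* > r_*` with `f₁(r'_*) = 1`. -/
theorem stmt16 (γ B₀ κ₂ : ℝ) (hγ : 1 < γ) (hB : 0 < B₀) (hκ₂ : κ₂ ≠ 0)
    (rstar : ℝ) (hrstar : rstar = Real.sqrt (γ * κ₂ ^ 2 / ((γ - 1) * B₀)))
    (x f₁ : ℝ → ℝ)
    (hx1 : ∀ r : ℝ, rstar < r → 1 < x r)
    (hxdiff : ∀ r : ℝ, rstar < r → DifferentiableAt ℝ x r)
    (hx' : ∀ r : ℝ, rstar < r → 0 < deriv x r)
    (hf₁ : ∀ r : ℝ, f₁ r =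
      (1 - (γ + 1) / (γ - 1) * (κ₂ ^ 2 / (2 * r ^ 2 * B₀ - κ₂ ^ 2))) * x r) :
    (∀ r : ℝ, rstar < r → 0 < deriv f₁ r) ∧
    ((∃ C : ℝ, 0 < C ∧ ∀ᶠ r in Filter.atTop, C * r ^ (γ - 1) ≤ x r) →
      (Filter.Tendsto f₁ Filter.atTop Filter.atTop ∧
        ∃! r' : ℝ, rstar < r' ∧ f₁ r' = 1)) := by
  change rstar = criticalRadius γ B₀ κ₂ at hrstar
  subst hrstar
  have hfg : f₁ = shockFactor γ B₀ κ₂ * x := funext hf₁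
  have hf₁diff (r : ℝ) (hr : criticalRadius γ B₀ κ₂ < r) : DifferentiableAt ℝ f₁ r :=
    hfg ▸ (differentiableAt_shockFactor hγ hB hκ₂ hr).mul (hxdiff r hr)
  have hderiv (r : ℝ) (hr : criticalRadius γ B₀ κ₂ < r) : 0 < deriv f₁ r := by
    rw [hfg]
    exact deriv_mul_pos (differentiableAt_shockFactor hγ hB hκ₂ hr) (hxdiff r hr)
      (shockFactor_pos hγ hB hκ₂ hr) (one_pos.trans (hx1 r hr))
      (deriv_shockFactor_pos hγ hB hκ₂ hr).le (hx' r hr)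
  refine ⟨hderiv, fun ⟨C, hC, hxC⟩ => ?_⟩
  have hf₁top : Tendsto f₁ atTop atTop := by
    rw [hfg]
    exact (tendsto_shockFactor_atTop hB).pos_mul_atTop one_pos
      (tendsto_atTop_of_rpow_le hC (by linarith) hxC)
  have hf₁left : Tendsto f₁ (𝓝[>] criticalRadius γ B₀ κ₂) (𝓝 0) := by
    rw [hfg]
    exact (tendsto_shockFactor_nhdsGT_criticalRadius hγ hB hκ₂).zero_mul_isBoundedUnder_le
      (isBoundedUnder_norm_nhdsGT_of_monotoneOn (fun r hr => one_pos.trans (hx1 r hr))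
        (strictMonoOn_Ioi_of_deriv_pos hxdiff hx').monotoneOn)
  exact ⟨hf₁top, existsUnique_eq_of_strictMonoOn_Ioi
    (fun r hr => (hf₁diff r hr).continuousAt.continuousWithinAt)
    (strictMonoOn_Ioi_of_deriv_pos hf₁diff hderiv) hf₁left hf₁top one_pos⟩
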